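/- Let G be a finite, simple, connected graph, let T1 and T2 be disjoint subsets of V(G) with T1 ∪ T2 nonempty, and let φ be a cheapest (T1,T2)-extension of G. Then every good component of φ contains at least one vertex of T1 ∪ T2. -/

import Mathlib

open scoped Classical

variable {V : Type*}

/-- The spanning subgraph of `G` whose edges are the *bad* edges w.r.t. the
2-coloring `φ` (edges whose endpoints get the same color). -/
def badGraph (G : SimpleGraph V) (φ : V → Fin 2) : SimpleGraph V where
  Adj u v := G.Adj u v ∧ φ u = φ v
  symm := ⟨fun u v h => ⟨h.1.symm, h.2.symm⟩⟩
  loopless := ⟨fun v h => G.loopless.irrefl v h.1⟩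

/-- The spanning subgraph of `G` whose edges are the *good* edges w.r.t. the
2-coloring `φ` (edges whose endpoints get different colors). -/
def goodGraph (G : SimpleGraph V) (φ : V → Fin 2) : SimpleGraph V where
  Adj u v := G.Adj u v ∧ φ u ≠ φ v
  symm := ⟨fun u v h => ⟨h.1.symm, Ne.symm h.2⟩⟩
  loopless := ⟨fun v h => G.loopless.irrefl v h.1⟩

/-- `X` is a monochromatic component of the 2-coloring `φ` of `G`: the vertex set of a
connected component of the subgraph of `G` induced by one of the two color classes. -/
def IsMonochromaticComponent (G : SimpleGraph V) (φ : V → Fin 2) (X : Set V) : Prop :=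
  ∃ (i : Fin 2) (c : (SimpleGraph.induce (φ ⁻¹' {i}) G).ConnectedComponent),
    X = Subtype.val '' c.supp

/-- `X` is a good component of the 2-coloring `φ` of `G`: the vertex set of a connected
component of the spanning subgraph of `G` consisting of the good edges. -/
def IsGoodComponent (G : SimpleGraph V) (φ : V → Fin 2) (X : Set V) : Prop :=
  ∃ c : (goodGraph G φ).ConnectedComponent, X = c.supp

/-- The cost of a 2-coloring `φ` of `G`: the sum, over all monochromatic components `X`
of `φ`, of `|X| - 1`. -/
noncomputable def cost (G : SimpleGraph V) (φ : V → Fin 2) : ℕ :=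
  ∑ᶠ X ∈ {X : Set V | IsMonochromaticComponent G φ X}, (Nat.card X - 1)

/-- A 2-coloring is a `(T₁,T₂)`-extension if it colors every vertex of `T₁` with the first
color and every vertex of `T₂` with the second color. -/
def IsExtension (φ : V → Fin 2) (T1 T2 : Set V) : Prop :=
  (∀ x ∈ T1, φ x = 0) ∧ (∀ x ∈ T2, φ x = 1)

/-- A cheapest `(T₁,T₂)`-extension of `G`: no `(T₁,T₂)`-extension has strictly smaller cost. -/
noncomputable def IsCheapestExtension (G : SimpleGraph V) (φ : V → Fin 2)
    (T1 T2 : Set V) : Prop :=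
  IsExtension φ T1 T2 ∧ ∀ ψ : V → Fin 2, IsExtension ψ T1 T2 → cost G φ ≤ cost G ψ

/-- `X` is `p`-connected in `G`: `|X| ≥ p` and for all subsets `X₁, X₂ ⊆ X` with
`|X₁| = |X₂| ≤ p` there are `|X₁|` pairwise vertex-disjoint paths in `G`, each with one
endpoint in `X₁` and the other endpoint in `X₂`. -/
def PConnected (G : SimpleGraph V) (p : ℕ) (X : Set V) : Prop :=
  p ≤ Nat.card X ∧
  ∀ X1 X2 : Finset V, ↑X1 ⊆ X → ↑X2 ⊆ X → X1.card = X2.card → X1.card ≤ p →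
    ∃ (a b : Fin X1.card → V) (w : ∀ i, G.Walk (a i) (b i)),
      (∀ i, (w i).IsPath) ∧ (∀ i, a i ∈ X1) ∧ (∀ i, b i ∈ X2) ∧
      ∀ i j, i ≠ j → ∀ x, x ∈ (w i).support → x ∉ (w j).support

/-- `X` is well-connected in `G` if it is `(|X|/2)`-connected. -/
def WellConnected (G : SimpleGraph V) (X : Set V) : Prop :=
  PConnected G (Nat.card X / 2) X

/-- `d_G(X)`: the number of edges of `G` with exactly one endpoint in `X`. -/
noncomputable def cutCard (G : SimpleGraph V) (X : Set V) : ℕ :=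
  Nat.card {e : Sym2 V | e ∈ G.edgeSet ∧ ∃ a b, e = s(a, b) ∧ a ∈ X ∧ b ∉ X}

/-- `X` is an `(x,y)`-important set in `G`. -/
noncomputable def ImportantSet (G : SimpleGraph V) (x y : V) (X : Set V) : Prop :=
  x ∈ X ∧ y ∉ X ∧ (SimpleGraph.induce X G).Connected ∧
  ¬ ∃ X' : Set V, X ⊂ X' ∧ y ∉ X' ∧ (SimpleGraph.induce X' G).Connected ∧
      cutCard G X' ≤ cutCard G X

/-- `G` has a tree decomposition of width at most `w`. -/
def HasTreewidthAtMost (G : SimpleGraph V) (w : ℕ) : Prop :=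
  ∃ (n : ℕ) (T : SimpleGraph (Fin n)) (bag : Fin n → Finset V),
    T.IsTree ∧
    (∀ v : V, ∃ i, v ∈ bag i) ∧
    (∀ u v : V, G.Adj u v → ∃ i, u ∈ bag i ∧ v ∈ bag i) ∧
    (∀ v : V, (SimpleGraph.induce {i | v ∈ bag i} T).Connected) ∧
    (∀ i, (bag i).card ≤ w + 1)

/-- The treewidth of `G`: the minimum width over all tree decompositions of `G`. -/
noncomputable def treewidth (G : SimpleGraph V) : ℕ :=
  sInf {w | HasTreewidthAtMost G w}

/-- The graph `G/S` obtained from `G` by contracting the edges of `S`: its vertices are the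
connected components of the graph `(V(G), S)`, two distinct components being adjacent iff
`G` has an edge with one endpoint in each of them. -/
def contractEdges (G : SimpleGraph V) (S : Set (Sym2 V)) :
    SimpleGraph (SimpleGraph.fromEdgeSet S).ConnectedComponent where
  Adj c d := c ≠ d ∧ ∃ u v : V, G.Adj u v ∧
      (SimpleGraph.fromEdgeSet S).connectedComponentMk u = c ∧
      (SimpleGraph.fromEdgeSet S).connectedComponentMk v = d
  symm := by
    constructor
    rintro c d ⟨hcd, u, v, ha, hu, hv⟩
    exact ⟨hcd.symm, v, u, ha.symm, hv, hu⟩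
  loopless := ⟨fun c h => h.1 rfl⟩

/-- The graph `G*` obtained from `G` by adding a new vertex (here `none`) adjacent to
exactly the vertices of `Y`. -/
def addApex (G : SimpleGraph V) (Y : Set V) : SimpleGraph (Option V) :=
  SimpleGraph.fromRel (fun a b =>
    (∃ u v : V, a = some u ∧ b = some v ∧ G.Adj u v) ∨
    (∃ u : V, a = some u ∧ b = none ∧ u ∈ Y))

/-- The set `Z`: the union, over all `x ∈ T`, of all `(x, y*)`-important sets `X` in
`G* = addApex G Y` with `d_{G*}(X) ≤ p`. -/
noncomputable def importantUnion (G : SimpleGraph V) (Y : Set V) (T : Set V) (p : ℕ) :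
    Set (Option V) :=
  {w | ∃ x ∈ T, ∃ X : Set (Option V),
    ImportantSet (addApex G Y) (some x) none X ∧ cutCard (addApex G Y) X ≤ p ∧ w ∈ X}

/-!
Flipping both colors on a good component `C` that avoids `T₁ ∪ T₂` yields another
`(T₁,T₂)`-extension. All edges leaving `C` are bad, and the flip turns exactly these into good
edges while keeping every other edge as it was. The cost of a coloring is `|V|` minus the number
of components of its bad graph, and since `G` is connected some edge `uv` leaves `C`: before the
flip `u` and `v` lie in one bad component, after it no bad edge crosses the boundary of `C`, so
the flip splits components and strictly lowers the cost.
-/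

namespace SimpleGraph

theorem ConnectedComponent.card_lt_card_of_le_of_not_reachable [Finite V]
    {G G' : SimpleGraph V} (h : G ≤ G') {u v : V} (huv : G'.Reachable u v)
    (hnot : ¬ G.Reachable u v) :
    Nat.card G'.ConnectedComponent < Nat.card G.ConnectedComponent := by
  have := Fintype.ofFinite G.ConnectedComponent
  have := Fintype.ofFinite G'.ConnectedComponent
  rw [Nat.card_eq_fintype_card, Nat.card_eq_fintype_card]
  refine Fintype.card_lt_of_surjective_not_injective _ (ConnectedComponent.surjective_map_ofLE h)
    fun hinj => hnot (ConnectedComponent.eq.mp (hinj ?_))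
  exact ConnectedComponent.sound huv

theorem sum_card_supp_sub_one_add_card_connectedComponent [Fintype V] (G : SimpleGraph V) :
    ∑ᶠ c : G.ConnectedComponent, (Nat.card c.supp - 1) + Nat.card G.ConnectedComponent =
      Fintype.card V := by
  have := Fintype.ofFinite G.ConnectedComponent
  have hsum : ∑ c : G.ConnectedComponent, Nat.card c.supp = Fintype.card V := by
    rw [← Nat.card_eq_fintype_card, ← Nat.card_sigma]
    exact Nat.card_congr (Equiv.sigmaFiberEquiv G.connectedComponentMk)
  rw [finsum_eq_sum_of_fintype, Nat.card_eq_fintype_card, ← hsum, Fintype.card,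
    Finset.card_eq_sum_ones, ← Finset.sum_add_distrib]
  refine Finset.sum_congr rfl fun c _ => Nat.sub_add_cancel ?_
  obtain ⟨v, hv⟩ := c.exists_rep
  have : Nonempty c.supp := ⟨⟨v, hv⟩⟩
  exact Nat.card_pos

end SimpleGraph

open SimpleGraph

section

variable {G : SimpleGraph V} {φ : V → Fin 2}

theorem badGraph_reachable_color_eq {u v : V} (h : (badGraph G φ).Reachable u v) :
    φ u = φ v := by
  obtain ⟨w⟩ := h
  induction w with
  | nil => rfl
  | cons h _ ih => exact h.2.trans ih

def induceColorClassHomBadGraph (G : SimpleGraph V) (φ : V → Fin 2) (i : Fin 2) :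
    G.induce (φ ⁻¹' {i}) →g badGraph G φ where
  toFun := Subtype.val
  map_rel' {a b} h := ⟨h, a.2.trans b.2.symm⟩

theorem induce_colorClass_reachable_of_badGraph_walk {i : Fin 2} {u v : V}
    (w : (badGraph G φ).Walk u v) (hu : φ u = i) (hv : φ v = i) :
    (G.induce (φ ⁻¹' {i})).Reachable ⟨u, hu⟩ ⟨v, hv⟩ := by
  induction w with
  | nil => rfl
  | @cons u b v h _ ih =>
    have hb : φ b = i := h.2.symm.trans hu
    exact (show (G.induce (φ ⁻¹' {i})).Adj ⟨u, hu⟩ ⟨b, hb⟩ from h.1).reachable.trans (ih hb hv)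

theorem image_supp_induce_colorClass {i : Fin 2} (u : V) (hu : φ u = i) :
    Subtype.val '' ((G.induce (φ ⁻¹' {i})).connectedComponentMk ⟨u, hu⟩).supp =
      ((badGraph G φ).connectedComponentMk u).supp := by
  ext x
  simp only [Set.mem_image, ConnectedComponent.mem_supp_iff, ConnectedComponent.eq]
  constructor
  · rintro ⟨y, hr, rfl⟩
    exact hr.map (induceColorClassHomBadGraph G φ i)
  · intro hr
    have hx : φ x = i := (badGraph_reachable_color_eq hr).trans hu
    exact ⟨⟨x, hx⟩, induce_colorClass_reachable_of_badGraph_walk hr.some hx hu, rfl⟩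

theorem isMonochromaticComponent_iff {X : Set V} :
    IsMonochromaticComponent G φ X ↔ ∃ c : (badGraph G φ).ConnectedComponent, X = c.supp := by
  constructor
  · rintro ⟨i, c, rfl⟩
    obtain ⟨⟨u, hu⟩, rfl⟩ := c.exists_rep
    exact ⟨_, image_supp_induce_colorClass u hu⟩
  · rintro ⟨c, rfl⟩
    obtain ⟨u, rfl⟩ := c.exists_rep
    exact ⟨φ u, _, (image_supp_induce_colorClass u rfl).symm⟩

theorem cost_add_card_connectedComponent_badGraph [Fintype V] (G : SimpleGraph V)
    (φ : V → Fin 2) :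
    cost G φ + Nat.card (badGraph G φ).ConnectedComponent = Fintype.card V := by
  have hcomponents : {X : Set V | IsMonochromaticComponent G φ X} =
      Set.range (ConnectedComponent.supp (G := badGraph G φ)) := by
    ext X
    simp only [Set.mem_ofPred_eq, Set.mem_range, isMonochromaticComponent_iff, eq_comm]
  rw [cost, hcomponents, finsum_mem_range ConnectedComponent.supp_injective]
  exact sum_card_supp_sub_one_add_card_connectedComponent _

noncomputable def swapColorsOn (φ : V → Fin 2) (S : Set V) : V → Fin 2 :=
  fun v => if v ∈ S then φ v + 1 else φ v

theorem Fin.two_add_one_eq_iff_ne (a b : Fin 2) : a + 1 = b ↔ a ≠ b := by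
  revert a b; decide

variable {S : Set V} (hS : ∀ ⦃u v⦄, u ∈ S → (goodGraph G φ).Adj u v → v ∈ S)
include hS

theorem badGraph_swapColorsOn_adj_iff {u v : V} :
    (badGraph G (swapColorsOn φ S)).Adj u v ↔ (badGraph G φ).Adj u v ∧ (u ∈ S ↔ v ∈ S) := by
  show G.Adj u v ∧ swapColorsOn φ S u = swapColorsOn φ S v ↔ (G.Adj u v ∧ φ u = φ v) ∧ _
  unfold swapColorsOn
  by_cases hu : u ∈ S <;> by_cases hv : v ∈ S <;>
    simp only [hu, hv, if_true, if_false, add_left_inj, iff_true, iff_false, not_true, and_true,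
      and_false, Fin.two_add_one_eq_iff_ne]
  · exact fun h => hv (hS hu h)
  · rw [eq_comm, Fin.two_add_one_eq_iff_ne]
    exact fun h => hu (hS hv ⟨h.1.symm, h.2⟩)

theorem badGraph_swapColorsOn_le : badGraph G (swapColorsOn φ S) ≤ badGraph G φ :=
  fun _ _ h => ((badGraph_swapColorsOn_adj_iff hS).1 h).1

theorem mem_iff_mem_of_reachable_badGraph_swapColorsOn {u v : V}
    (h : (badGraph G (swapColorsOn φ S)).Reachable u v) : u ∈ S ↔ v ∈ S := by
  obtain ⟨w⟩ := h
  induction w with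
  | nil => rfl
  | cons h _ ih => exact ((badGraph_swapColorsOn_adj_iff hS).1 h).2.trans ih

theorem cost_swapColorsOn_lt [Fintype V] {u v : V} (huv : G.Adj u v) (hu : u ∈ S) (hv : v ∉ S) :
    cost G (swapColorsOn φ S) < cost G φ := by
  have hbad : (badGraph G φ).Adj u v := ⟨huv, not_not.1 fun hne => hv (hS hu ⟨huv, hne⟩)⟩
  have hcard := ConnectedComponent.card_lt_card_of_le_of_not_reachable
    (badGraph_swapColorsOn_le hS) hbad.reachable
    fun h => hv ((mem_iff_mem_of_reachable_badGraph_swapColorsOn hS h).1 hu)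
  have := cost_add_card_connectedComponent_badGraph G φ
  have := cost_add_card_connectedComponent_badGraph G (swapColorsOn φ S)
  omega

omit hS in
theorem IsExtension.swapColorsOn {T1 T2 : Set V} (h : IsExtension φ T1 T2)
    (hST : Disjoint S (T1 ∪ T2)) : IsExtension (swapColorsOn φ S) T1 T2 := by
  have hfix : ∀ x ∈ T1 ∪ T2, _root_.swapColorsOn φ S x = φ x :=
    fun x hx => if_neg (hST.notMem_of_mem_right hx)
  exact ⟨fun x hx => (hfix x (.inl hx)).trans (h.1 x hx),
    fun x hx => (hfix x (.inr hx)).trans (h.2 x hx)⟩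

end

theorem stmt6_general {V : Type*} [Fintype V] (G : SimpleGraph V) (hconn : G.Connected)
    (T1 T2 : Set V) (hne : (T1 ∪ T2).Nonempty)
    (φ : V → Fin 2) (hcheap : IsCheapestExtension G φ T1 T2) :
    ∀ X : Set V, IsGoodComponent G φ X → ∃ x ∈ T1 ∪ T2, x ∈ X := by
  rintro _ ⟨C, rfl⟩
  by_contra! hC
  obtain ⟨t, ht⟩ := hne
  obtain ⟨u, hu⟩ := C.exists_rep
  obtain ⟨d, -, hd, hd'⟩ :=
    (hconn.preconnected u t).some.exists_boundary_dart C.supp hu (hC t ht)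
  have hext := hcheap.1.swapColorsOn (Set.disjoint_left.2 fun x hx hxT => hC x hxT hx)
  exact (cost_swapColorsOn_lt (fun _ _ => C.mem_supp_of_adj_mem_supp) d.adj hd hd').not_ge
    (hcheap.2 _ hext)

/-- if `G` is connected, `T₁`, `T₂` are disjoint with `T₁ ∪ T₂` nonempty, and
`φ` is a cheapest `(T₁,T₂)`-extension of `G`, then every good component of `φ` contains a
vertex of `T₁ ∪ T₂`. -/
theorem stmt6 {V : Type*} [Fintype V] (G : SimpleGraph V) (hconn : G.Connected)
    (T1 T2 : Set V) (hdisj : Disjoint T1 T2) (hne : (T1 ∪ T2).Nonempty)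
    (φ : V → Fin 2) (hcheap : IsCheapestExtension G φ T1 T2) :
    ∀ X : Set V, IsGoodComponent G φ X → ∃ x ∈ T1 ∪ T2, x ∈ X :=
  stmt6_general G hconn T1 T2 hne φ hcheap
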